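/- arXiv:2507.09991 — 2 statements merged into one kernel-verified Lean document; each statement's English description precedes it below -/
import Mathlib

section
/- Let f(x), g(x), h(x) be polynomials with coefficients in F_q. Then the number of pairs (x, y) ∈ F_q × F_q satisfying f(x)y^2 + g(x)y + h(x) = 0 equals q·(1 + n_{f,g,h}) - n_f + ∑_{x ∈ F_q} σ(g(x)^2 - 4 f(x) h(x)), where n_f = #{x ∈ F_q : f(x) = 0} and n_{f,g,h} = #{x ∈ F_q : f(x) = g(x) = h(x) = 0}. -/
/-!
Count the solutions fibre by fibre over `x`. For fixed `x` the equation is quadratic in `y`;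
completing the square shows that when `f x ≠ 0` it has `1 + σ(Δ)` roots, `Δ` the discriminant.
The fibres with `f x = 0` have `1` root if `g x ≠ 0`, none if `g x = 0 ≠ h x`, and `q` if all three
vanish; the correction terms `q n_{f,g,h} - n_f`, together with `σ(g(x)²) = 1` when `g x ≠ 0`,
record exactly this.
-/

open Polynomial Finset

theorem card_filter_prod_eq_sum_card_filter {α β : Type*} [Fintype α] [Fintype β]
    (p : α × β → Prop) [DecidablePred p] :
    #{q | p q} = ∑ a, #{b | p (a, b)} := by
  simp only [card_filter, Fintype.sum_prod_type]

section QuadraticRoots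

variable {F : Type*} [Field F] [Fintype F] [DecidableEq F]

/-- Completing the square: `y ↦ 2 a y + b` maps the roots onto the square roots of the
discriminant. -/
theorem card_quadratic_roots_eq_card_sqrts (h2 : ringChar F ≠ 2) {a : F} (ha : a ≠ 0) (b c : F) :
    #{y | a * y ^ 2 + b * y + c = 0} = #{z | z ^ 2 = discrim a b c} := by
  have : NeZero (2 : F) := ⟨Ring.two_ne_zero h2⟩
  have h2a : 2 * a ≠ 0 := mul_ne_zero two_ne_zero ha
  have hroot (y : F) : a * y ^ 2 + b * y + c = 0 ↔ discrim a b c = (2 * a * y + b) ^ 2 := by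
    rw [sq y]; exact quadratic_eq_zero_iff_discrim_eq_sq ha y
  refine card_nbij' (fun y ↦ 2 * a * y + b) (fun z ↦ (z - b) / (2 * a)) ?_ ?_ ?_ ?_
  · intro y hy
    simp only [coe_filter, mem_univ, true_and, Set.mem_ofPred_eq] at hy ⊢
    exact ((hroot y).1 hy).symm
  · intro z hz
    simp only [coe_filter, mem_univ, true_and, Set.mem_ofPred_eq] at hz ⊢
    rw [hroot, mul_div_cancel₀ _ h2a, sub_add_cancel, hz]
  · intro y _
    simp only [add_sub_cancel_right, mul_div_cancel_left₀ _ h2a]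
  · intro z _
    simp only [mul_div_cancel₀ _ h2a, sub_add_cancel]

theorem card_quadratic_roots_of_ne_zero (h2 : ringChar F ≠ 2) {a : F} (ha : a ≠ 0) (b c : F) :
    (#{y | a * y ^ 2 + b * y + c = 0} : ℤ) = quadraticChar F (discrim a b c) + 1 := by
  rw [card_quadratic_roots_eq_card_sqrts h2 ha, ← quadraticChar_card_sqrts h2]
  congr 2
  ext; simp

theorem card_linear_roots_of_ne_zero {b : F} (hb : b ≠ 0) (c : F) :
    #{y | b * y + c = 0} = 1 := by
  rw [card_eq_one]
  refine ⟨-c / b, ?_⟩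
  ext y
  simp only [mem_filter, mem_univ, true_and, mem_singleton]
  rw [eq_div_iff hb, eq_neg_iff_add_eq_zero, mul_comm]

theorem card_quadratic_roots (h2 : ringChar F ≠ 2) (a b c : F) :
    (#{y | a * y ^ 2 + b * y + c = 0} : ℤ) =
      1 + (if a = 0 ∧ b = 0 ∧ c = 0 then (Fintype.card F : ℤ) else 0)
        - (if a = 0 then 1 else 0) + quadraticChar F (discrim a b c) := by
  by_cases ha : a = 0
  swap
  · rw [card_quadratic_roots_of_ne_zero h2 ha]
    simp only [ha, false_and, ↓reduceIte, add_zero, sub_zero]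
    ring
  subst ha
  by_cases hb : b = 0
  · subst hb
    by_cases hc : c = 0 <;> simp [hc, discrim, filter_true_of_mem, filter_false_of_mem]
  · simp only [zero_mul, zero_add, card_linear_roots_of_ne_zero hb, discrim, mul_zero, sub_zero,
      quadraticChar_sq_one' hb]
    simp [hb]

end QuadraticRoots

theorem solution_count_lemma_general {F : Type*} [Field F] [Fintype F] [DecidableEq F]
    (h2 : ringChar F ≠ 2) (f g h : F[X]) :
    ((univ.filter fun p : F × F =>
        f.eval p.1 * p.2 ^ 2 + g.eval p.1 * p.2 + h.eval p.1 = 0).card : ℤ) =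
      (Fintype.card F : ℤ) *
          (1 + ((univ.filter fun x : F =>
            f.eval x = 0 ∧ g.eval x = 0 ∧ h.eval x = 0).card : ℤ)) -
        ((univ.filter fun x : F => f.eval x = 0).card : ℤ) +
        ∑ x : F, quadraticChar F (g.eval x ^ 2 - 4 * f.eval x * h.eval x) := by
  rw [card_filter_prod_eq_sum_card_filter, Nat.cast_sum]
  simp only [card_quadratic_roots h2, discrim, sum_add_distrib, sum_sub_distrib, sum_const,
    card_univ, sum_ite, Int.nsmul_eq_mul, mul_one, nsmul_zero, add_zero]
  ring

theorem solution_count_lemma {F : Type*} [Field F] [Fintype F] [DecidableEq F]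
    (h2 : ringChar F ≠ 2) (h3 : ringChar F ≠ 3) (f g h : F[X]) :
    ((univ.filter fun p : F × F =>
        f.eval p.1 * p.2 ^ 2 + g.eval p.1 * p.2 + h.eval p.1 = 0).card : ℤ) =
      (Fintype.card F : ℤ) *
          (1 + ((univ.filter fun x : F =>
            f.eval x = 0 ∧ g.eval x = 0 ∧ h.eval x = 0).card : ℤ)) -
        ((univ.filter fun x : F => f.eval x = 0).card : ℤ) +
        ∑ x : F, quadraticChar F (g.eval x ^ 2 - 4 * f.eval x * h.eval x) :=
  solution_count_lemma_general h2 f g h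
end

section
/- Let p > 3 be a prime. Then (-1/p) · ∑_{x ∈ F_p, x ≠ 0} ((x^3 + x^2 + x)/p) - ∑_{x ∈ F_p, x ≠ 0} (((x^2 + 1)(x^2 + 4x + 1))/p) = 2, where (·/p) denotes the Legendre symbol. Equivalently, ∑_{x ∈ F_p} (((x^2 + 1)(x^2 + 4x + 1))/p) = -1 + (-1/p) · ∑_{x ∈ F_p} ((x^3 + x^2 + x)/p). -/
/-!
For `b ≠ 0` the map `x ↦ x + b / x` on `Fˣ` hits `u` exactly `χ (u ^ 2 - 4 * b) + 1` times,
and a palindromic polynomial in `x` is `x ^ 2` times a polynomial in `x + b / x`. This turns both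
sums over `x ≠ 0` into character sums of cubics. Together with affine substitutions, the
substitution `v = x ^ 2` (each `v` has `χ v + 1` square roots) and the Jacobi sum evaluation
`∑ χ (u * (u - c)) = -1` for `c ≠ 0`, one finds that `χ (-1)` times the first sum equals
`∑ χ (x * (x - 1) * (x - 9))` and the second sum equals it minus `2`.
-/

open Finset

section
variable {F : Type*} [Field F] [Fintype F] [DecidableEq F]

local notation "χ" => quadraticChar F

theorem sum_quadraticChar_add (hF : ringChar F ≠ 2) (c : F) : ∑ x, χ (x + c) = 0 :=
  (Equiv.sum_comp (Equiv.addRight c) _).trans (quadraticChar_sum_zero hF)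

theorem sum_quadraticChar_mul_sub (hF : ringChar F ≠ 2) {c : F} (hc : c ≠ 0) :
    ∑ x, χ (x * (x - c)) = -1 := by
  have hJ := jacobiSum_nontrivial_inv (quadraticChar_ne_one hF)
  rw [(quadraticChar_isQuadratic F).inv, jacobiSum] at hJ
  calc ∑ x, χ (x * (x - c))
      = ∑ t, χ (c * t * (c * t - c)) := (Equiv.sum_comp (Equiv.mulLeft₀ c hc) _).symm
    _ = χ (-1) * ∑ t, χ t * χ (1 - t) := by
        rw [mul_sum]
        refine sum_congr rfl fun t _ => ?_
        rw [show c * t * (c * t - c) = c ^ 2 * (-1 * (t * (1 - t))) by ring, map_mul, map_mul,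
          map_mul, quadraticChar_sq_one' hc, one_mul]
    _ = -1 := by rw [hJ, mul_neg, ← sq, quadraticChar_sq_one (neg_ne_zero.mpr one_ne_zero)]

theorem card_filter_sq_eq (hF : ringChar F ≠ 2) (a : F) :
    (#{x | x ^ 2 = a} : ℤ) = χ a + 1 := by
  simpa only [Set.toFinset_ofPred] using quadraticChar_card_sqrts hF a

theorem card_filter_quadratic_eq_zero (hF : ringChar F ≠ 2) (e f : F) :
    (#{x | x ^ 2 + e * x + f = 0} : ℤ) = χ (e ^ 2 - 4 * f) + 1 := by
  have h2 : (2 : F) ≠ 0 := Ring.two_ne_zero hF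
  rw [← card_filter_sq_eq hF]
  congr 1
  refine card_nbij' (fun x => 2 * x + e) (fun y => (y - e) / 2) ?_ ?_ ?_ ?_
  · intro x hx
    simp only [coe_filter, mem_univ, true_and, Set.mem_ofPred_eq] at hx ⊢
    linear_combination 4 * hx
  · intro y hy
    simp only [coe_filter, mem_univ, true_and, Set.mem_ofPred_eq] at hy ⊢
    field_simp
    linear_combination hy
  · intro x _
    field_simp
    ring
  · intro y _
    field_simp
    ring

theorem sum_comp_sq (hF : ringChar F ≠ 2) (G : F → ℤ) :
    ∑ x, G (x ^ 2) = ∑ u, (χ u + 1) * G u := by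
  rw [← sum_fiberwise' univ (fun x : F => x ^ 2) G]
  refine sum_congr rfl fun u _ => ?_
  rw [sum_const, ← card_filter_sq_eq hF u, nsmul_eq_mul]

theorem sum_comp_add_mul_inv (hF : ringChar F ≠ 2) {b : F} (hb : b ≠ 0) (G : F → ℤ) :
    ∑ x ∈ univ.filter (fun x : F => x ≠ 0), G (x + b * x⁻¹)
      = ∑ u, (χ (u ^ 2 - 4 * b) + 1) * G u := by
  rw [← sum_fiberwise' _ (fun x => x + b * x⁻¹) G]
  refine sum_congr rfl fun u _ => ?_
  have hfiber : (univ.filter fun x : F => x ≠ 0).filter (fun x => x + b * x⁻¹ = u)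
      = univ.filter fun x => x ^ 2 + (-u) * x + b = 0 := by
    ext x
    simp only [filter_filter, mem_filter, mem_univ, true_and]
    constructor
    · rintro ⟨hx, rfl⟩
      field_simp
      ring
    · intro hx
      have hx0 : x ≠ 0 := by
        rintro rfl
        exact hb (by simpa using hx)
      refine ⟨hx0, ?_⟩
      field_simp
      linear_combination hx
  rw [sum_const, hfiber, nsmul_eq_mul, card_filter_quadratic_eq_zero hF, neg_sq]

theorem sum_quadraticChar_comp_sq (hF : ringChar F ≠ 2) (g : F → F) :
    ∑ x, χ (g (x ^ 2)) = ∑ v, χ (v * g v) + ∑ v, χ (g v) := by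
  simp only [sum_comp_sq hF (fun v => χ (g v)), add_mul, one_mul, map_mul, sum_add_distrib]

theorem sum_quadraticChar_of_eq_sq_mul (hF : ringChar F ≠ 2) {b : F} (hb : b ≠ 0)
    {P g : F → F} (hP : ∀ x ≠ 0, P x = x ^ 2 * g (x + b * x⁻¹)) :
    ∑ x ∈ univ.filter (fun x : F => x ≠ 0), χ (P x)
      = ∑ u, χ ((u ^ 2 - 4 * b) * g u) + ∑ u, χ (g u) := by
  have hsq : ∀ x ∈ univ.filter (fun x : F => x ≠ 0), χ (P x) = χ (g (x + b * x⁻¹)) := by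
    intro x hx
    rw [hP x (mem_filter.mp hx).2, map_mul, quadraticChar_sq_one' (mem_filter.mp hx).2, one_mul]
  rw [sum_congr rfl hsq, sum_comp_add_mul_inv hF hb (fun u => χ (g u))]
  simp only [add_mul, one_mul, map_mul, sum_add_distrib]

theorem quadraticChar_neg_one_mul_sum_cubic (hF : ringChar F ≠ 2) :
    χ (-1) * ∑ x ∈ univ.filter (fun x : F => x ≠ 0), χ (x ^ 3 + x ^ 2 + x)
      = ∑ x, χ (x * (x - 1) * (x - 9)) := by
  have h4 : (4 : F) ≠ 0 := by
    rw [show (4 : F) = 2 ^ 2 by norm_num]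
    exact pow_ne_zero _ (Ring.two_ne_zero hF)
  calc χ (-1) * ∑ x ∈ univ.filter (fun x : F => x ≠ 0), χ (x ^ 3 + x ^ 2 + x)
      = χ (-1) * ∑ u, χ ((u ^ 2 - 4 * 1) * (u + 1)) := by
        rw [sum_quadraticChar_of_eq_sq_mul hF one_ne_zero (g := fun u => u + 1)
          (fun x hx => by field_simp; ring), sum_quadraticChar_add hF, add_zero]
    _ = ∑ x, χ (x * (x + 1) * (x + 4)) := by
        rw [mul_sum]
        refine Fintype.sum_equiv ((Equiv.neg F).trans (Equiv.subRight 2)) _ _ fun u => ?_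
        simp only [← map_mul, Equiv.trans_apply, Equiv.neg_apply, Equiv.subRight_apply]
        congr 1
        ring
    _ = ∑ x ∈ univ.filter (fun x : F => x ≠ 0), χ (x * (x + 1) * (x + 4)) := by
        refine (sum_filter_of_ne fun x _ hx => ?_).symm
        rintro rfl
        simp at hx
    _ = ∑ u, χ ((u ^ 2 - 4 * 4) * (u + 5)) := by
        rw [sum_quadraticChar_of_eq_sq_mul hF h4 (g := fun u => u + 5)
          (fun x hx => by field_simp; ring), sum_quadraticChar_add hF, add_zero]
    _ = ∑ x, χ (x * (x - 1) * (x - 9)) := by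
        refine Fintype.sum_equiv (Equiv.addRight 5) _ _ fun u => ?_
        simp only [Equiv.coe_addRight]
        congr 1
        ring

theorem sum_quadraticChar_quartic (hF : ringChar F ≠ 2) :
    ∑ x ∈ univ.filter (fun x : F => x ≠ 0), χ ((x ^ 2 + 1) * (x ^ 2 + 4 * x + 1))
      = ∑ x, χ (x * (x - 1) * (x - 9)) - 2 := by
  have h4 : (4 : F) ≠ 0 := by
    rw [show (4 : F) = 2 ^ 2 by norm_num]
    exact pow_ne_zero _ (Ring.two_ne_zero hF)
  have h8 : (8 : F) ≠ 0 := by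
    rw [show (8 : F) = 2 ^ 3 by norm_num]
    exact pow_ne_zero _ (Ring.two_ne_zero hF)
  have hsum_four : ∑ u, χ (u * (u + 4)) = -1 := by
    simpa only [sub_neg_eq_add] using sum_quadraticChar_mul_sub hF (neg_ne_zero.mpr h4)
  have hsum_one_nine : ∑ v, χ ((v - 1) * (v - 9)) = -1 := by
    rw [← sum_quadraticChar_mul_sub hF h8]
    refine Fintype.sum_equiv (Equiv.subRight 1) _ _ fun v => ?_
    simp only [Equiv.subRight_apply]
    congr 1
    ring
  calc ∑ x ∈ univ.filter (fun x : F => x ≠ 0), χ ((x ^ 2 + 1) * (x ^ 2 + 4 * x + 1))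
      = ∑ u, χ ((u ^ 2 - 4 * 1) * (u * (u + 4))) - 1 := by
        rw [sum_quadraticChar_of_eq_sq_mul hF one_ne_zero (g := fun u => u * (u + 4))
          (fun x hx => by field_simp; ring), hsum_four, sub_eq_add_neg]
    _ = ∑ x, χ ((x ^ 2 - 1) * (x ^ 2 - 9)) - 1 := by
        congr 1
        refine Fintype.sum_equiv (Equiv.addRight 1) _ _ fun u => ?_
        simp only [Equiv.coe_addRight]
        congr 1
        ring
    _ = ∑ x, χ (x * (x - 1) * (x - 9)) - 2 := by
        rw [sum_quadraticChar_comp_sq hF (fun v => (v - 1) * (v - 9)), hsum_one_nine]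
        simp only [mul_assoc]
        ring

end

theorem zhang_identity (p : ℕ) [Fact p.Prime] (hp : 3 < p) :
    (quadraticChar (ZMod p) (-1) *
        ∑ x ∈ univ.filter (fun x : ZMod p => x ≠ 0),
          quadraticChar (ZMod p) (x ^ 3 + x ^ 2 + x) -
      ∑ x ∈ univ.filter (fun x : ZMod p => x ≠ 0),
        quadraticChar (ZMod p) ((x ^ 2 + 1) * (x ^ 2 + 4 * x + 1)) = 2) ∧
    (∑ x : ZMod p, quadraticChar (ZMod p) ((x ^ 2 + 1) * (x ^ 2 + 4 * x + 1)) =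
      -1 + quadraticChar (ZMod p) (-1) *
        ∑ x : ZMod p, quadraticChar (ZMod p) (x ^ 3 + x ^ 2 + x)) := by
  have hp2 : ringChar (ZMod p) ≠ 2 := by
    rw [ZMod.ringChar_zmod_n]
    omega
  have hcubic := quadraticChar_neg_one_mul_sum_cubic hp2
  have hquartic := sum_quadraticChar_quartic hp2
  refine ⟨by rw [hcubic, hquartic]; ring, ?_⟩
  have hsplit (f : ZMod p → ℤ) : ∑ x, f x = f 0 + ∑ x ∈ univ.filter (fun x => x ≠ 0), f x := by
    rw [filter_ne', add_sum_erase _ _ (mem_univ 0)]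
  have hquartic_zero : ((0 : ZMod p) ^ 2 + 1) * (0 ^ 2 + 4 * 0 + 1) = 1 := by ring
  have hcubic_zero : (0 : ZMod p) ^ 3 + 0 ^ 2 + 0 = 0 := by ring
  rw [hsplit, hsplit (fun x => quadraticChar (ZMod p) (x ^ 3 + x ^ 2 + x)), hquartic_zero,
    hcubic_zero, map_one, quadraticChar_zero]
  linear_combination hquartic - hcubic
end
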